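/- arXiv:1507.08413 — 2 statements merged into one kernel-verified Lean document; each statement's English description precedes it below -/
import Mathlib

section
/- Moreau's identity: for any proper lower semicontinuous convex function f on a real Hilbert space H, any λ > 0, and any x ∈ H, one has x = prox_{λf}(x) + λ · prox_{(1/λ)f*}(x/λ), where f* is the Fenchel conjugate of f. -/
open scoped BigOperators
noncomputable section

variable {H : Type*} [NormedAddCommGroup H] [InnerProductSpace ℝ H]

/-- `p` is a proximity point of the extended-real-valued `f` at `x`:
it minimizes `y ↦ f y + (1/2)‖x - y‖²`. -/
def EProx (f : H → EReal) (x p : H) : Prop :=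
  ∀ y : H, f p + (((1:ℝ)/2 * ‖x - p‖^2 : ℝ) : EReal) ≤
    f y + (((1:ℝ)/2 * ‖x - y‖^2 : ℝ) : EReal)

/-- Fenchel conjugate of an extended-real-valued function. -/
def EConj (f : H → EReal) (x : H) : EReal :=
  ⨆ u : H, ((inner ℝ x u : ℝ) : EReal) - f u

/-- Convex subdifferential of an extended-real-valued function. -/
def ESubdiff (f : H → EReal) (x : H) : Set H :=
  {g : H | ∀ y : H, f x + ((inner ℝ g (y - x) : ℝ) : EReal) ≤ f y}

/-- `f` is proper: never `⊥` and somewhere finite. -/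
def EProper (f : H → EReal) : Prop :=
  (∀ x, f x ≠ ⊥) ∧ ∃ x, f x ≠ ⊤

/-- Convexity of an extended-real-valued function. -/
def EConvexOn (f : H → EReal) : Prop :=
  ∀ x y : H, ∀ a b : ℝ, 0 ≤ a → 0 ≤ b → a + b = 1 →
    f (a • x + b • y) ≤ ((a : EReal)) * f x + ((b : EReal)) * f y

/-! Put `u = λ⁻¹ • (x - p)`. Comparing `p` with the points `p + t • (z - p)` of a segment and
letting `t → 0` shows that `u` is a subgradient of `f` at `p`, so the Fenchel–Young inequality is an
equality there: `f* u = ⟪u, p⟫ - f p`. As `f* y ≥ ⟪y, p⟫ - f p` for every `y`, the objective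
`y ↦ λ⁻¹ f* y + ½‖λ⁻¹ • x - y‖²` exceeds its value at `u` by at least `½‖y - u‖²`; hence `u` is
its only minimiser and `q = u`. -/

open Filter Topology
open scoped RealInnerProductSpace

theorem le_of_forall_le_add_mul {a b c : ℝ} (h : ∀ t : ℝ, 0 < t → t ≤ 1 → a ≤ b + t * c) :
    a ≤ b := by
  have hlim : Tendsto (fun t : ℝ => b + t * c) (𝓝[>] 0) (𝓝 b) := by
    have h0 : Tendsto (fun t : ℝ => b + t * c) (𝓝 0) (𝓝 (b + 0 * c)) :=
      (continuous_const.add (continuous_id.mul continuous_const)).tendsto 0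
    rw [zero_mul, add_zero] at h0
    exact h0.mono_left nhdsWithin_le_nhds
  exact ge_of_tendsto hlim (eventually_of_mem (Ioc_mem_nhdsGT one_pos) fun t ht => h t ht.1 ht.2)

section

variable {E : Type*} [NormedAddCommGroup E] {g : E → EReal} {x p : E}

theorem EProx.ne_top (hp : EProx g x p) {y : E} (hy : g y ≠ ⊤) : g p ≠ ⊤ := by
  intro htop
  have h := hp y
  rw [htop, EReal.top_add_coe, top_le_iff] at h
  exact (EReal.add_lt_top hy (EReal.coe_ne_top _)).ne h

theorem EProx.le_of_le_coe (hp : EProx g x p) {r ρ : ℝ} (hr : g p = r) {w : E} (hw : g w ≤ ρ) :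
    r + 1 / 2 * ‖x - p‖ ^ 2 ≤ ρ + 1 / 2 * ‖x - w‖ ^ 2 := by
  have h := (hp w).trans (add_le_add_left hw _)
  rw [hr] at h
  exact_mod_cast h

theorem EProx.eq_of_forall_add_le {q : E} (hq : EProx g x q) {u : E} {m : ℝ} (hu : g u = m)
    (hgrowth : ∀ y, ((m + 1 / 2 * ‖x - u‖ ^ 2 + 1 / 2 * ‖y - u‖ ^ 2 : ℝ) : EReal) ≤
      g y + ((1 / 2 * ‖x - y‖ ^ 2 : ℝ) : EReal)) :
    q = u := by
  have h := (hgrowth q).trans (hq u)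
  rw [hu] at h
  norm_cast at h
  have : ‖q - u‖ ^ 2 ≤ 0 := by linarith
  rw [← sub_eq_zero, ← norm_eq_zero]
  exact pow_eq_zero_iff two_ne_zero |>.1 (le_antisymm this (sq_nonneg _))

end

section

variable {f : H → EReal} {p : H} {r : ℝ}

theorem coe_inner_sub_le_eConj (hr : f p = r) (y : H) :
    ((⟪y, p⟫ - r : ℝ) : EReal) ≤ EConj f y := by
  rw [EReal.coe_sub, ← hr]
  exact le_iSup (fun z => ((⟪y, z⟫ : ℝ) : EReal) - f z) p

theorem eConj_eq_of_mem_eSubdiff (hr : f p = r) {u : H} (hu : u ∈ ESubdiff f p) :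
    EConj f u = ((⟪u, p⟫ - r : ℝ) : EReal) := by
  refine le_antisymm (iSup_le fun z => ?_) (coe_inner_sub_le_eConj hr u)
  have h := hu z
  rw [hr] at h
  cases hz : f z using EReal.rec with
  | bot => rw [hz, ← EReal.coe_add, le_bot_iff] at h; exact absurd h (EReal.coe_ne_bot _)
  | top => simp
  | coe s =>
    rw [hz] at h
    norm_cast at h ⊢
    rw [inner_sub_right] at h
    linarith

theorem EProx.inv_smul_sub_mem_eSubdiff (hcv : EConvexOn f) {lam : ℝ} (hlam : 0 < lam) {x : H}
    (hp : EProx (fun y => (lam : EReal) * f y) x p) (hr : f p = r) :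
    lam⁻¹ • (x - p) ∈ ESubdiff f p := by
  intro z
  rw [hr, real_inner_smul_left]
  cases hz : f z using EReal.rec with
  | bot =>
    have h := hp z
    beta_reduce at h
    rw [hz, hr, EReal.coe_mul_bot_of_pos hlam, EReal.bot_add, le_bot_iff, ← EReal.coe_mul,
      ← EReal.coe_add] at h
    exact absurd h (EReal.coe_ne_bot _)
  | top => exact le_top
  | coe s =>
    suffices ⟪x - p, z - p⟫ ≤ lam * (s - r) by
      norm_cast
      linarith [(inv_mul_le_iff₀ hlam).2 this]
    refine le_of_forall_le_add_mul (c := ‖z - p‖ ^ 2 / 2) fun t ht ht1 => ?_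
    have hconv : f (t • z + (1 - t) • p) ≤ ((t * s + (1 - t) * r : ℝ) : EReal) := by
      have := hcv z p t (1 - t) ht.le (by linarith) (by ring)
      rwa [hz, hr, ← EReal.coe_mul, ← EReal.coe_mul, ← EReal.coe_add] at this
    have hprox := hp.le_of_le_coe (r := lam * r) (ρ := lam * (t * s + (1 - t) * r))
      (by rw [hr, EReal.coe_mul])
      (by rw [EReal.coe_mul]; exact mul_le_mul_of_nonneg_left hconv (EReal.coe_nonneg.2 hlam.le))
    have hnorm : ‖x - (t • z + (1 - t) • p)‖ ^ 2 =
        ‖x - p‖ ^ 2 - 2 * (t * ⟪x - p, z - p⟫) + t ^ 2 * ‖z - p‖ ^ 2 := by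
      rw [show x - (t • z + (1 - t) • p) = (x - p) - t • (z - p) by module, norm_sub_sq_real,
        real_inner_smul_right, norm_smul, Real.norm_eq_abs, abs_of_pos ht, mul_pow]
    rw [hnorm] at hprox
    refine le_of_mul_le_mul_left ?_ ht
    linarith

theorem EProx.eq_of_eConj_eq (hr : f p = r) {u : H} (hu : EConj f u = ((⟪u, p⟫ - r : ℝ) : EReal))
    {c : ℝ} (hc : 0 ≤ c) {q : H} (hq : EProx (fun y => (c : EReal) * EConj f y) (u + c • p) q) :
    q = u := by
  refine hq.eq_of_forall_add_le (m := c * (⟪u, p⟫ - r)) (by rw [hu, EReal.coe_mul]) fun y => ?_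
  have hid : c * (⟪u, p⟫ - r) + 1 / 2 * ‖u + c • p - u‖ ^ 2 + 1 / 2 * ‖y - u‖ ^ 2 =
      c * (⟪y, p⟫ - r) + 1 / 2 * ‖u + c • p - y‖ ^ 2 := by
    rw [add_sub_cancel_left, show u + c • p - y = (u - y) + c • p by abel, norm_add_sq_real,
      real_inner_smul_right, inner_sub_left, norm_sub_rev y u]
    ring
  rw [hid, EReal.coe_add, EReal.coe_mul]
  gcongr
  exact coe_inner_sub_le_eConj hr y

end

theorem moreau_identity_general {H : Type*} [NormedAddCommGroup H] [InnerProductSpace ℝ H]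
    (f : H → EReal) (hf : EProper f)
    (hcv : EConvexOn f) (lam : ℝ) (hlam : 0 < lam) (x p q : H)
    (hp : EProx (fun y => ((lam : ℝ) : EReal) * f y) x p)
    (hq : EProx (fun y => ((lam⁻¹ : ℝ) : EReal) * EConj f y) (lam⁻¹ • x) q) :
    x = p + lam • q := by
  obtain ⟨hbot, y₀, hy₀⟩ := hf
  have hfp : f p ≠ ⊤ := by
    have hfin : (lam : EReal) * f p ≠ ⊤ := hp.ne_top (y := y₀) <| by
      rw [← EReal.coe_toReal hy₀ (hbot y₀), ← EReal.coe_mul]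
      exact EReal.coe_ne_top _
    exact fun htop => hfin (by rw [htop, EReal.coe_mul_top_of_pos hlam])
  obtain ⟨r, hr⟩ : ∃ r : ℝ, f p = r := ⟨_, (EReal.coe_toReal hfp (hbot p)).symm⟩
  have hsub := hp.inv_smul_sub_mem_eSubdiff hcv hlam hr
  rw [show lam⁻¹ • x = lam⁻¹ • (x - p) + lam⁻¹ • p by rw [← smul_add, sub_add_cancel]] at hq
  rw [hq.eq_of_eConj_eq hr (eConj_eq_of_mem_eSubdiff hr hsub) (inv_nonneg.2 hlam.le), smul_smul,
    mul_inv_cancel₀ hlam.ne', one_smul, add_sub_cancel]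

/-- Moreau's identity: `x = prox_{λf}(x) + λ · prox_{(1/λ)f*}(x/λ)`. -/
theorem moreau_identity {H : Type*} [NormedAddCommGroup H] [InnerProductSpace ℝ H]
    [CompleteSpace H] (f : H → EReal) (hf : EProper f) (hlsc : LowerSemicontinuous f)
    (hcv : EConvexOn f) (lam : ℝ) (hlam : 0 < lam) (x p q : H)
    (hp : EProx (fun y => ((lam : ℝ) : EReal) * f y) x p)
    (hq : EProx (fun y => ((lam⁻¹ : ℝ) : EReal) * EConj f y) (lam⁻¹ • x) q) :
    x = p + lam • q :=
  moreau_identity_general f hf hcv lam hlam x p q hp hq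
end
end

section
/- Diagonal preconditioner bound: Let K be a real m × n matrix and α ∈ [0, 2]. Define diagonal matrices T = diag(τ₁, …, τ_n) and Σ = diag(σ₁, …, σ_m) with τ_j = 1/Σ_{i=1}^m |K_{ij}|^{2−α} and σ_i = 1/Σ_{j=1}^n |K_{ij}|^α (assuming all these sums are positive). Then the operator norm satisfies ‖Σ^{1/2} K T^{1/2}‖² ≤ 1. -/
/-!
Splitting `|K i j| = |K i j| ^ (α / 2) * |K i j| ^ (1 - α / 2)` and applying Cauchy–Schwarz to
each row gives `(∑ j, K i j * y j)² ≤ (∑ j, |K i j| ^ α) * ∑ j, |K i j| ^ (2 - α) * y j²`. The row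
weight cancels the first factor; after summing over `i`, the column weight cancels
`∑ i, |K i j| ^ (2 - α)`.
-/

open Finset

lemma rpow_div_two_sq {x : ℝ} (hx : 0 ≤ x) (p : ℝ) : (x ^ (p / 2)) ^ 2 = x ^ p := by
  rw [← Real.rpow_mul_natCast hx]
  norm_num

lemma abs_eq_rpow_mul_rpow (a s : ℝ) : |a| = |a| ^ (s / 2) * |a| ^ ((2 - s) / 2) := by
  have hsum : s / 2 + (2 - s) / 2 = 1 := by ring
  rw [← Real.rpow_add' (abs_nonneg a) (hsum ▸ one_ne_zero), hsum, Real.rpow_one]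

section

variable {κ : Type*} [Fintype κ]

lemma sq_sum_mul_le_sum_rpow_mul_sum_rpow_mul_sq (a y : κ → ℝ) (s : ℝ) :
    (∑ j, a j * y j) ^ 2 ≤ (∑ j, |a j| ^ s) * ∑ j, |a j| ^ (2 - s) * y j ^ 2 := by
  have hsplit : ∀ j, |a j * y j| = |a j| ^ (s / 2) * (|a j| ^ ((2 - s) / 2) * |y j|) := by
    intro j
    rw [abs_mul, ← mul_assoc, ← abs_eq_rpow_mul_rpow]
  calc (∑ j, a j * y j) ^ 2 = |∑ j, a j * y j| ^ 2 := (sq_abs _).symm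
    _ ≤ (∑ j, |a j * y j|) ^ 2 := by
        gcongr
        exact abs_sum_le_sum_abs _ _
    _ ≤ (∑ j, (|a j| ^ (s / 2)) ^ 2) * ∑ j, (|a j| ^ ((2 - s) / 2) * |y j|) ^ 2 := by
        simp only [hsplit]
        exact sum_mul_sq_le_sq_mul_sq _ _ _
    _ = (∑ j, |a j| ^ s) * ∑ j, |a j| ^ (2 - s) * y j ^ 2 := by
        simp only [mul_pow, sq_abs, rpow_div_two_sq (abs_nonneg _)]

lemma one_div_sum_rpow_mul_sq_sum_mul_le (a y : κ → ℝ) (s : ℝ) :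
    1 / (∑ j, |a j| ^ s) * (∑ j, a j * y j) ^ 2 ≤ ∑ j, |a j| ^ (2 - s) * y j ^ 2 := by
  have hr : 0 ≤ 1 / ∑ j, |a j| ^ s := by positivity
  calc 1 / (∑ j, |a j| ^ s) * (∑ j, a j * y j) ^ 2
      ≤ 1 / (∑ j, |a j| ^ s) * ((∑ j, |a j| ^ s) * ∑ j, |a j| ^ (2 - s) * y j ^ 2) :=
        mul_le_mul_of_nonneg_left (sq_sum_mul_le_sum_rpow_mul_sum_rpow_mul_sq a y s) hr
    _ = ((∑ j, |a j| ^ s) * (∑ j, |a j| ^ s)⁻¹) * ∑ j, |a j| ^ (2 - s) * y j ^ 2 := by ring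
    _ ≤ ∑ j, |a j| ^ (2 - s) * y j ^ 2 :=
        mul_le_of_le_one_left (by positivity) mul_inv_le_one

end

theorem diag_preconditioner_bound_general {m n : ℕ} (K : Matrix (Fin m) (Fin n) ℝ)
    (α : ℝ) :
    ∀ x : Fin n → ℝ,
      ∑ i, ((Matrix.of fun i j =>
          Real.sqrt (1 / ∑ j', |K i j'| ^ α) * K i j *
            Real.sqrt (1 / ∑ i', |K i' j| ^ (2 - α))).mulVec x i) ^ 2
        ≤ ∑ j, (x j) ^ 2 := by
  intro x
  set c : Fin n → ℝ := fun j => ∑ i, |K i j| ^ (2 - α)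
  set y : Fin n → ℝ := fun j => Real.sqrt (1 / c j) * x j
  have hy : ∀ j, y j ^ 2 = (c j)⁻¹ * x j ^ 2 := fun j => by
    rw [mul_pow, Real.sq_sqrt (by positivity), one_div]
  have hrow : ∀ i, ((Matrix.of fun i j => Real.sqrt (1 / ∑ j', |K i j'| ^ α) * K i j *
      Real.sqrt (1 / c j)).mulVec x i) ^ 2 ≤ ∑ j, |K i j| ^ (2 - α) * y j ^ 2 := fun i => by
    have hmulVec : (Matrix.of fun i j => Real.sqrt (1 / ∑ j', |K i j'| ^ α) * K i j *
        Real.sqrt (1 / c j)).mulVec x i = Real.sqrt (1 / ∑ j, |K i j| ^ α) * ∑ j, K i j * y j := by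
      simp only [Matrix.mulVec, dotProduct, Matrix.of_apply, mul_sum, y, mul_assoc]
    rw [hmulVec, mul_pow, Real.sq_sqrt (by positivity)]
    exact one_div_sum_rpow_mul_sq_sum_mul_le (K i) y α
  calc _ ≤ ∑ i, ∑ j, |K i j| ^ (2 - α) * y j ^ 2 := sum_le_sum fun i _ => hrow i
    _ = ∑ j, (c j * (c j)⁻¹) * x j ^ 2 := by
        rw [sum_comm]
        simp only [hy, c, sum_mul]
        refine sum_congr rfl fun j _ => sum_congr rfl fun i _ => by ring
    _ ≤ ∑ j, x j ^ 2 :=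
        sum_le_sum fun j _ => mul_le_of_le_one_left (sq_nonneg _) mul_inv_le_one

/-- Diagonal preconditioner bound (Pock–Chambolle): with
`τ_j = 1/Σᵢ |K_{ij}|^{2−α}` and `σ_i = 1/Σⱼ |K_{ij}|^α`, the matrix
`Σ^{1/2} K T^{1/2}` has Euclidean operator norm at most `1`, i.e.
`‖Σ^{1/2} K T^{1/2} x‖² ≤ ‖x‖²` for every `x`. -/
theorem diag_preconditioner_bound {m n : ℕ} (K : Matrix (Fin m) (Fin n) ℝ)
    (α : ℝ) (hα0 : 0 ≤ α) (hα2 : α ≤ 2)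
    (hcol : ∀ j, 0 < ∑ i, |K i j| ^ (2 - α))
    (hrow : ∀ i, 0 < ∑ j, |K i j| ^ α) :
    ∀ x : Fin n → ℝ,
      ∑ i, ((Matrix.of fun i j =>
          Real.sqrt (1 / ∑ j', |K i j'| ^ α) * K i j *
            Real.sqrt (1 / ∑ i', |K i' j| ^ (2 - α))).mulVec x i) ^ 2
        ≤ ∑ j, (x j) ^ 2 :=
  diag_preconditioner_bound_general K α
end
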